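/- arXiv:1009.4938 — 6 statements merged into one kernel-verified Lean document; each statement's English description precedes it below -/
import Mathlib

section
/- For every integer t ≥ 1, the sum over pairs (c,d) of positive integers with c+d=t of binomial(t,c)·c^{c-1}·d^{d-1} equals 2·(t-1)·t^{t-2}. -/
/-!
The Abel polynomials `A₀ = 1`, `Aₙ(x) = x (x + n)ⁿ⁻¹` are of binomial type,
`∑ₖ C(n,k) Aₖ(x) Aₙ₋ₖ(y) = Aₙ(x + y)`: induct on `n`, since differentiating both sides in `x`
lowers `n` by one and shifts `x` to `x + 1`, and both sides agree at `x = 0`, where `Aₖ(0) = 0`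
for `k > 0`. For `y = x` the two extreme terms give `2 Aₜ(x)` and the others `x² S(x)` with
`S(x) = ∑_{0<k<t} C(t,k) (x+k)ᵏ⁻¹ (x+t-k)ᵗ⁻ᵏ⁻¹`, so `x S(x) = 2(2x + t)ᵗ⁻¹ - 2(x + t)ᵗ⁻¹`.
Differentiating at `x = 0` gives `S(0) = 2(t-1)tᵗ⁻²`, and `S(0)` is the sum in question.
-/

open Finset

noncomputable def abelPoly : ℕ → ℝ → ℝ
  | 0, _ => 1
  | n + 1, x => x * (x + (n + 1)) ^ n

@[simp]
lemma abelPoly_zero (x : ℝ) : abelPoly 0 x = 1 := rfl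

lemma abelPoly_of_ne_zero {n : ℕ} (hn : n ≠ 0) (x : ℝ) :
    abelPoly n x = x * (x + n) ^ (n - 1) := by
  obtain ⟨m, rfl⟩ := Nat.exists_eq_succ_of_ne_zero hn
  simp [abelPoly]

lemma abelPoly_apply_zero {n : ℕ} (hn : n ≠ 0) : abelPoly n 0 = 0 := by
  simp [abelPoly_of_ne_zero hn]

lemma hasDerivAt_abelPoly (n : ℕ) (x : ℝ) :
    HasDerivAt (abelPoly n) (n * abelPoly (n - 1) (x + 1)) x := by
  match n with
  | 0 =>
    show HasDerivAt (fun _ => (1 : ℝ)) _ x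
    simpa using hasDerivAt_const x (1 : ℝ)
  | 1 =>
    have h : abelPoly 1 = id := funext fun x => by simp [abelPoly]
    simpa [h, abelPoly] using hasDerivAt_id x
  | m + 2 =>
    have h := (hasDerivAt_id' x).fun_mul
      (((hasDerivAt_id' x).add_const ((m + 1 : ℕ) + 1 : ℝ)).fun_pow (m + 1))
    refine h.congr_deriv ?_
    simp only [abelPoly, Nat.add_sub_cancel]
    push_cast
    ring

/-- The derivative, in the first factor, of a binomial convolution `∑ C(n,k) aₖ bₙ₋ₖ`. -/
lemma sum_range_choose_mul_pred {R : Type*} [CommSemiring R] (a b : ℕ → R) (n : ℕ) :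
    ∑ k ∈ range (n + 2), ((n + 1).choose k : R) * (k * a (k - 1)) * b (n + 1 - k)
      = (n + 1) * ∑ k ∈ range (n + 1), (n.choose k : R) * a k * b (n - k) := by
  rw [sum_range_succ', mul_sum]
  simp only [Nat.cast_zero, zero_mul, mul_zero, add_zero]
  refine sum_congr rfl fun k _ => ?_
  have h := congrArg (Nat.cast (R := R)) (Nat.add_one_mul_choose_eq n k)
  push_cast at h ⊢
  simp only [← mul_assoc, h]

theorem sum_choose_mul_abelPoly (n : ℕ) (x y : ℝ) :
    ∑ k ∈ range (n + 1), (n.choose k : ℝ) * abelPoly k x * abelPoly (n - k) y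
      = abelPoly n (x + y) := by
  induction n generalizing x with
  | zero => simp [abelPoly]
  | succ n ih =>
    set f' : ℝ → ℝ := fun x => (n + 1) * abelPoly n (x + 1 + y)
    have hl : ∀ x, HasDerivAt
        (fun x => ∑ k ∈ range (n + 2), ((n + 1).choose k : ℝ) * abelPoly k x * abelPoly (n + 1 - k) y)
        (f' x) x := by
      intro x
      have h := HasDerivAt.fun_sum fun k (_ : k ∈ range (n + 2)) =>
        ((hasDerivAt_abelPoly k x).const_mul ((n + 1).choose k : ℝ)).mul_const (abelPoly (n + 1 - k) y)
      refine h.congr_deriv ?_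
      rw [sum_range_choose_mul_pred (fun k => abelPoly k (x + 1)) (fun k => abelPoly k y), ih]
    have hr : ∀ x, HasDerivAt (fun x => abelPoly (n + 1) (x + y)) (f' x) x := by
      intro x
      refine ((hasDerivAt_abelPoly (n + 1) (x + y)).comp_add_const x y).congr_deriv ?_
      simp only [f', Nat.add_sub_cancel, add_right_comm x 1 y]
      push_cast
      ring
    have h₀ : ∑ k ∈ range (n + 2), ((n + 1).choose k : ℝ) * abelPoly k 0 * abelPoly (n + 1 - k) y
        = abelPoly (n + 1) (0 + y) := by
      rw [sum_range_succ']
      simp [abelPoly_apply_zero]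
    exact congrFun (eq_of_fderiv_eq (fun x => (hl x).differentiableAt)
      (fun x => (hr x).differentiableAt)
      (fun x => by rw [(hl x).hasFDerivAt.fderiv, (hr x).hasFDerivAt.fderiv]) 0 h₀) x

noncomputable def abelMiddleSum (t : ℕ) (x : ℝ) : ℝ :=
  ∑ k ∈ Ico 1 t, (t.choose k : ℝ) * (x + k) ^ (k - 1) * (x + (t - k : ℕ)) ^ (t - k - 1)

lemma abelPoly_two_mul {t : ℕ} (ht : t ≠ 0) (x : ℝ) :
    abelPoly t (2 * x) = 2 * abelPoly t x + x ^ 2 * abelMiddleSum t x := by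
  have h := sum_choose_mul_abelPoly t x x
  rw [sum_range_succ, sum_range_eq_add_Ico _ (Nat.pos_of_ne_zero ht)] at h
  have hmid : ∑ k ∈ Ico 1 t, (t.choose k : ℝ) * abelPoly k x * abelPoly (t - k) x
      = x ^ 2 * abelMiddleSum t x := by
    rw [abelMiddleSum, mul_sum]
    refine sum_congr rfl fun k hk => ?_
    rw [mem_Ico] at hk
    rw [abelPoly_of_ne_zero (by omega), abelPoly_of_ne_zero (by omega)]
    ring
  simp only [hmid, Nat.choose_zero_right, Nat.choose_self, Nat.cast_one, Nat.sub_zero,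
    Nat.sub_self, abelPoly_zero, one_mul, mul_one] at h
  rw [two_mul x, ← h]
  ring

lemma mul_abelMiddleSum (t : ℕ) (x : ℝ) :
    x * abelMiddleSum t x = 2 * (2 * x + t) ^ (t - 1) - 2 * (x + t) ^ (t - 1) := by
  rcases eq_or_ne t 0 with rfl | ht
  · simp [abelMiddleSum]
  rcases eq_or_ne x 0 with rfl | hx
  · simp
  have h := abelPoly_two_mul ht x
  rw [abelPoly_of_ne_zero ht, abelPoly_of_ne_zero ht] at h
  apply mul_left_cancel₀ hx
  linear_combination -h

lemma differentiable_abelMiddleSum (t : ℕ) : Differentiable ℝ (abelMiddleSum t) := by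
  unfold abelMiddleSum
  fun_prop

lemma abelMiddleSum_zero (t : ℕ) :
    abelMiddleSum t 0
      = ((∑ c ∈ Ico 1 t, t.choose c * c ^ (c - 1) * (t - c) ^ (t - c - 1) : ℕ) : ℝ) := by
  simp [abelMiddleSum]

theorem abel_identity_c_minus_one_general (t : ℕ) :
    ∑ c ∈ Finset.Ico 1 t, t.choose c * c ^ (c - 1) * (t - c) ^ (t - c - 1)
      = 2 * (t - 1) * t ^ (t - 2) := by
  have hl : HasDerivAt (fun x => x * abelMiddleSum t x) (abelMiddleSum t 0) 0 := by
    simpa using (hasDerivAt_id' 0).fun_mul (differentiable_abelMiddleSum t 0).hasDerivAt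
  have hr : HasDerivAt (fun x : ℝ => 2 * (2 * x + t) ^ (t - 1) - 2 * (x + t) ^ (t - 1))
      (2 * (t - 1 : ℕ) * t ^ (t - 2)) 0 := by
    have h2 := (((hasDerivAt_id 0).const_mul 2).add_const (t : ℝ)).pow (t - 1)
    have h1 := ((hasDerivAt_id 0).add_const (t : ℝ)).pow (t - 1)
    refine ((h2.const_mul 2).sub (h1.const_mul 2)).congr_deriv ?_
    simp only [id, mul_zero, zero_add, mul_one, show t - 1 - 1 = t - 2 by omega]
    ring
  rw [funext (mul_abelMiddleSum t)] at hl
  have h := (abelMiddleSum_zero t).symm.trans (hl.unique hr)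
  exact_mod_cast h

theorem abel_identity_c_minus_one (t : ℕ) (ht : 1 ≤ t) :
    ∑ c ∈ Finset.Ico 1 t, t.choose c * c ^ (c - 1) * (t - c) ^ (t - c - 1)
      = 2 * (t - 1) * t ^ (t - 2) :=
  abel_identity_c_minus_one_general t
end

section
/- Define a doubly-indexed family of rational numbers α_{i,j} by α_{i,0} = α_{0,i} = 1 for all i ≥ 0 and the recursion α_{i+1,j+1} = α_{i+1,j} + α_{i,j+1} + (1/2)·∑_{p=0}^{i}∑_{q=0}^{j} binomial(i+j+4, p+q+2)·α_{p,q}·α_{i-p,j-q}. Then all α_{i,j} are positive integers. -/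
/-!
Write `S i j` for the double sum in the recursion. By strong induction on `i`, then on `j`, all earlier
`α_{p,q}` are positive integers, so it suffices that `S i j` is an even integer. The
involution `(p, q) ↦ (i - p, j - q)` of the summation box preserves each term, because
`binomial(i+j+4, p+q+2)` is symmetric under it; so modulo 2 the terms cancel in pairs, leaving
only a fixed point `i = 2p, j = 2q`, whose coefficient is the central binomial coefficient
`binomial(2m, m)` with `m = p + q + 2 ≥ 1`, which is even.
-/

open Finset

theorem Finset.sum_eq_zero_of_involution_of_charTwo {ι R : Type*} [Ring R] [CharP R 2]
    {s : Finset ι} {f : ι → R} (σ : ι → ι) (hσ_mem : ∀ x ∈ s, σ x ∈ s)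
    (hσ_invol : ∀ x ∈ s, σ (σ x) = x) (hf : ∀ x ∈ s, f (σ x) = f x)
    (hfix : ∀ x ∈ s, σ x = x → f x = 0) : ∑ x ∈ s, f x = 0 :=
  sum_involution (fun x _ => σ x) (fun x hx => by rw [hf x hx, CharTwo.add_self_eq_zero])
    (fun x hx hne hσx => hne (hfix x hx hσx)) hσ_mem hσ_invol

section KeelConvolution

variable {R : Type*} [CommSemiring R]

def keelConvolution (k : ℕ) (f : ℕ → ℕ → R) (i j : ℕ) : R :=
  ∑ p ∈ range (i + 1), ∑ q ∈ range (j + 1),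
    ((i + j + 2 * k).choose (p + q + k) : R) * f p q * f (i - p) (j - q)

theorem keelConvolution_congr {k i j : ℕ} {f g : ℕ → ℕ → R}
    (h : ∀ p ≤ i, ∀ q ≤ j, f p q = g p q) :
    keelConvolution k f i j = keelConvolution k g i j := by
  refine sum_congr rfl fun p hp => sum_congr rfl fun q hq => ?_
  rw [mem_range] at hp hq
  rw [h p (by omega) q (by omega), h (i - p) (by omega) (j - q) (by omega)]

theorem natCast_keelConvolution (k : ℕ) (f : ℕ → ℕ → ℕ) (i j : ℕ) :
    ((keelConvolution k f i j : ℕ) : R) = keelConvolution k (fun p q => (f p q : R)) i j := by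
  simp [keelConvolution]

end KeelConvolution

theorem two_dvd_keelConvolution {k : ℕ} (hk : 0 < k) (f : ℕ → ℕ → ℕ) (i j : ℕ) :
    2 ∣ keelConvolution k f i j := by
  rw [← ZMod.natCast_eq_zero_iff, natCast_keelConvolution, keelConvolution, ← sum_product']
  refine sum_eq_zero_of_involution_of_charTwo (fun x => (i - x.1, j - x.2)) ?_ ?_ ?_ ?_ <;>
    intro x hx <;> simp only [mem_product, mem_range] at hx
  · simp only [mem_product, mem_range]
    omega
  · ext <;> dsimp only <;> omega
  · have hchoose : (i + j + 2 * k).choose (i - x.1 + (j - x.2) + k)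
        = (i + j + 2 * k).choose (x.1 + x.2 + k) := by
      rw [← Nat.choose_symm (by omega)]
      congr 1
      omega
    simp only [hchoose, Nat.sub_sub_self (show x.1 ≤ i by omega),
      Nat.sub_sub_self (show x.2 ≤ j by omega)]
    ring
  · intro hfix
    simp only [Prod.ext_iff] at hfix
    have hcentral : (i + j + 2 * k).choose (x.1 + x.2 + k) = (x.1 + x.2 + k).centralBinom := by
      rw [Nat.centralBinom_eq_two_mul_choose]
      congr 1
      omega
    have heven : ((i + j + 2 * k).choose (x.1 + x.2 + k) : ZMod 2) = 0 := by
      rw [hcentral, ZMod.natCast_eq_zero_iff]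
      exact Nat.two_dvd_centralBinom_of_one_le (by omega)
    rw [heven, zero_mul, zero_mul]

theorem alpha_positive_integers (a : ℕ → ℕ → ℚ)
    (h1 : ∀ i, a i 0 = 1) (h2 : ∀ i, a 0 i = 1)
    (hrec : ∀ i j, a (i + 1) (j + 1) = a (i + 1) j + a i (j + 1)
      + (1 / 2) * ∑ p ∈ Finset.range (i + 1), ∑ q ∈ Finset.range (j + 1),
          ((i + j + 4).choose (p + q + 2) : ℚ) * a p q * a (i - p) (j - q)) :
    ∀ i j, ∃ n : ℕ, 0 < n ∧ a i j = n := by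
  intro i
  induction i using Nat.strong_induction_on with | _ i ih_i => ?_
  intro j
  induction j using Nat.strong_induction_on with | _ j ih_j => ?_
  rcases i with _ | i; · exact ⟨1, one_pos, by rw [h2, Nat.cast_one]⟩
  rcases j with _ | j; · exact ⟨1, one_pos, by rw [h1, Nat.cast_one]⟩
  have ha_nat : ∀ p ≤ i, ∀ q ≤ j, a p q = (⌊a p q⌋₊ : ℚ) := fun p hp q _ => by
    obtain ⟨n, -, hn⟩ := ih_i p (by omega) q
    rw [hn, Nat.floor_natCast]
  obtain ⟨m, hm⟩ := two_dvd_keelConvolution two_pos (fun p q => ⌊a p q⌋₊) i j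
  have hhalf : (1 / 2 : ℚ) * keelConvolution 2 a i j = m := by
    rw [keelConvolution_congr ha_nat, ← natCast_keelConvolution, hm]
    push_cast
    ring
  obtain ⟨n₁, hn₁, e₁⟩ := ih_j j (Nat.lt_succ_self j)
  obtain ⟨n₂, hn₂, e₂⟩ := ih_i i (Nat.lt_succ_self i) (j + 1)
  refine ⟨n₁ + n₂ + m, by omega, ?_⟩
  rw [hrec, e₁, e₂]
  change _ + _ + 1 / 2 * keelConvolution 2 a i j = _
  rw [hhalf]
  norm_cast
end

section
/- Define σ_n = ∑_{i+j=n} α_{i,j}, where α_{i,j} satisfies α_{i,0}=α_{0,i}=1 and the recursion α_{i+1,j+1} = α_{i+1,j} + α_{i,j+1} + (1/2)·∑_{p=0}^{i}∑_{q=0}^{j} binomial(i+j+4,p+q+2)·α_{p,q}·α_{i-p,j-q}. Then σ_{n+2} = 2·σ_{n+1} + (1/2)·∑_{i+j=n} (n+4 choose i+2, j+2)·σ_i·σ_j, where (n+4 choose i+2, j+2) is the multinomial coefficient, with σ_0 = 1. -/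
open Finset

lemma reindex {M : Type*} [AddCommMonoid M] (n : ℕ) (g : ℕ → ℕ → ℕ → ℕ → M) :
    ∑ i ∈ range (n+1), ∑ p ∈ range (i+1), ∑ q ∈ range (n-i+1),
        g p q (i-p) (n-i-q)
    = ∑ s ∈ range (n+1), ∑ p ∈ range (s+1), ∑ u ∈ range (n-s+1),
        g p (s-p) u (n-s-u) := by
  have hL : ∑ i ∈ range (n+1), ∑ p ∈ range (i+1), ∑ q ∈ range (n-i+1),
        g p q (i-p) (n-i-q)
      = ∑ x ∈ (range (n+1)).sigma (fun i => (range (i+1)).sigma (fun _ => range (n-i+1))),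
          g x.2.1 x.2.2 (x.1 - x.2.1) (n - x.1 - x.2.2) := by
    simp only [Finset.sum_sigma]
  have hR : ∑ s ∈ range (n+1), ∑ p ∈ range (s+1), ∑ u ∈ range (n-s+1),
        g p (s-p) u (n-s-u)
      = ∑ x ∈ (range (n+1)).sigma (fun s => (range (s+1)).sigma (fun _ => range (n-s+1))),
          g x.2.1 (x.1 - x.2.1) x.2.2 (n - x.1 - x.2.2) := by
    simp only [Finset.sum_sigma]
  rw [hL, hR]
  refine Finset.sum_nbij' (fun x => ⟨x.2.1 + x.2.2, x.2.1, x.1 - x.2.1⟩)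
    (fun x => ⟨x.2.1 + x.2.2, x.2.1, x.1 - x.2.1⟩) ?_ ?_ ?_ ?_ ?_
  · rintro ⟨i, p, q⟩ h
    simp only [Finset.mem_sigma, Finset.mem_range] at h ⊢
    omega
  · rintro ⟨s, p, u⟩ h
    simp only [Finset.mem_sigma, Finset.mem_range] at h ⊢
    omega
  · rintro ⟨i, p, q⟩ h
    simp only [Finset.mem_sigma, Finset.mem_range] at h
    simp only [Sigma.mk.inj_iff, heq_eq_eq]
    exact ⟨by omega, trivial, by omega⟩
  · rintro ⟨s, p, u⟩ h
    simp only [Finset.mem_sigma, Finset.mem_range] at h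
    simp only [Sigma.mk.inj_iff, heq_eq_eq]
    exact ⟨by omega, trivial, by omega⟩
  · rintro ⟨i, p, q⟩ h
    simp only [Finset.mem_sigma, Finset.mem_range] at h
    have e1 : p + q - p = q := by omega
    have e2 : n - (p + q) - (i - p) = n - i - q := by omega
    simp [e1, e2]

theorem sigma_recursion (a : ℕ → ℕ → ℚ)
    (h1 : ∀ i, a i 0 = 1) (h2 : ∀ i, a 0 i = 1)
    (hrec : ∀ i j, a (i + 1) (j + 1) = a (i + 1) j + a i (j + 1)
      + (1 / 2) * ∑ p ∈ Finset.range (i + 1), ∑ q ∈ Finset.range (j + 1),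
          ((i + j + 4).choose (p + q + 2) : ℚ) * a p q * a (i - p) (j - q))
    (σ : ℕ → ℚ) (hσ : ∀ n, σ n = ∑ i ∈ Finset.range (n + 1), a i (n - i)) :
    σ 0 = 1 ∧ ∀ n, σ (n + 2) = 2 * σ (n + 1)
      + (1 / 2) * ∑ i ∈ Finset.range (n + 1),
          (((n + 4).factorial : ℚ) / ((i + 2).factorial * (n - i + 2).factorial))
            * σ i * σ (n - i) := by
  constructor
  · rw [hσ 0]; simp [h1]
  intro n
  -- expand σ (n+2)
  have e0 : σ (n+2) = (∑ i ∈ range (n+1), a (i+1) (n-i+1)) + 1 + 1 := by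
    rw [hσ (n+2), Finset.sum_range_succ' (fun i => a i (n+2-i)) (n+2),
      Finset.sum_range_succ]
    have hc : ∀ i ∈ range (n+1), a (i+1) (n+2-(i+1)) = a (i+1) (n-i+1) := by
      intro i hi
      rw [Finset.mem_range] at hi
      congr 1
      omega
    rw [Finset.sum_congr rfl hc]
    have : n + 2 - (n + 1) = 1 := by omega
    simp [h1, h2]
  have e1 : ∀ i ∈ range (n+1), a (i+1) (n-i+1)
      = a (i+1) (n-i) + a i (n-i+1)
        + (1/2) * ∑ p ∈ range (i+1), ∑ q ∈ range (n-i+1),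
            ((n+4).choose (p+q+2) : ℚ) * a p q * a (i-p) (n-i-q) := by
    intro i hi
    rw [Finset.mem_range] at hi
    have h4 : i + (n - i) = n := by omega
    rw [hrec i (n-i), h4]
  have hA : σ (n+1) = (∑ i ∈ range (n+1), a (i+1) (n-i)) + 1 := by
    rw [hσ (n+1), Finset.sum_range_succ' (fun i => a i (n+1-i)) (n+1)]
    have hc : ∀ i ∈ range (n+1), a (i+1) (n+1-(i+1)) = a (i+1) (n-i) := by
      intro i hi
      rw [Finset.mem_range] at hi
      congr 1
      omega
    rw [Finset.sum_congr rfl hc, h2]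
  have hB : σ (n+1) = (∑ i ∈ range (n+1), a i (n-i+1)) + 1 := by
    rw [hσ (n+1), Finset.sum_range_succ (fun i => a i (n+1-i)) (n+1)]
    have hc : ∀ i ∈ range (n+1), a i (n+1-i) = a i (n-i+1) := by
      intro i hi
      rw [Finset.mem_range] at hi
      congr 1
      omega
    rw [Finset.sum_congr rfl hc]
    simp [h1]
  have hT : ∑ i ∈ range (n+1), ∑ p ∈ range (i+1), ∑ q ∈ range (n-i+1),
        ((n+4).choose (p+q+2) : ℚ) * a p q * a (i-p) (n-i-q)
      = ∑ s ∈ range (n+1), ((n+4).choose (s+2) : ℚ) * σ s * σ (n-s) := by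
    rw [reindex n (fun p q u v => ((n+4).choose (p+q+2) : ℚ) * a p q * a u v)]
    refine Finset.sum_congr rfl (fun s hs => ?_)
    rw [Finset.mem_range] at hs
    have step1 : ∀ p ∈ range (s+1),
        ∑ u ∈ range (n-s+1), ((n+4).choose (p+(s-p)+2) : ℚ) * a p (s-p) * a u (n-s-u)
        = (((n+4).choose (s+2) : ℚ) * a p (s-p)) * ∑ u ∈ range (n-s+1), a u (n-s-u) := by
      intro p hp
      rw [Finset.mem_range] at hp
      have hps : p + (s - p) = s := by omega
      rw [Finset.mul_sum]
      exact Finset.sum_congr rfl (fun u _ => by rw [hps])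
    rw [Finset.sum_congr rfl step1, ← Finset.sum_mul, ← Finset.mul_sum,
      hσ s, hσ (n-s)]
  have hC : ∑ i ∈ range (n+1),
        (((n + 4).factorial : ℚ) / ((i + 2).factorial * (n - i + 2).factorial))
          * σ i * σ (n - i)
      = ∑ i ∈ range (n+1), ((n+4).choose (i+2) : ℚ) * σ i * σ (n-i) := by
    refine Finset.sum_congr rfl (fun i hi => ?_)
    rw [Finset.mem_range] at hi
    rw [Nat.cast_choose ℚ (by omega : i + 2 ≤ n + 4)]
    have : n + 4 - (i + 2) = n - i + 2 := by omega
    rw [this]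
  rw [e0, Finset.sum_congr rfl e1, Finset.sum_add_distrib, Finset.sum_add_distrib,
    ← Finset.mul_sum, hT, hC]
  linarith [hA, hB]
end

section
/- Let g be a function analytic near 0 with g(0) = 0 satisfying the ODE g'(x)·(1 - g(x)) = x + 2·g(x). Define u(x) by g(x) = 1 - (x+2)(u(x)+1). Then u satisfies (du/dx)·(1/u + 1/u²) = -1/(x+2), with u(0) = -1/2, and consequently (1/u)·e^{1/u} = -e^{-2}(x+2). -/
/-!
Substituting `1 - g = (x + 2)(u + 1)` into `g' (1 - g) = x + 2g` and dividing by `x + 2` gives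
`u' (u + 1) / u² = -1 / (x + 2)`. For `v = 1 / u` this reads
`(v eᵛ)' = v' (1 + v) eᵛ = v eᵛ / (x + 2)`, so `v eᵛ / (x + 2)` is constant on the interval;
at `0`, where `u = -1/2`, it equals `-e⁻²`.
-/

open Real Filter Topology

theorem IsOpen.div_add_const_eq_of_hasDerivAt {s : Set ℝ} {f : ℝ → ℝ} {c x y : ℝ}
    (hs : IsOpen s) (hs' : IsPreconnected s) (hc : ∀ z ∈ s, z + c ≠ 0)
    (hf : ∀ z ∈ s, HasDerivAt f (f z / (z + c)) z) (hx : x ∈ s) (hy : y ∈ s) :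
    f x / (x + c) = f y / (y + c) := by
  have hderiv : ∀ z ∈ s, HasDerivAt (fun z => f z / (z + c)) 0 z := by
    intro z hz
    refine ((hf z hz).fun_div ((hasDerivAt_id' z).add_const c) (hc z hz)).congr_deriv ?_
    field_simp [hc z hz]
    ring
  exact hs.is_const_of_deriv_eq_zero (f := fun z => f z / (z + c)) hs'
    (fun z hz => (hderiv z hz).differentiableAt.differentiableWithinAt)
    (fun z hz => (hderiv z hz).deriv) hx hy

theorem HasDerivAt.mul_exp_self {v : ℝ → ℝ} {v' x : ℝ} (hv : HasDerivAt v v' x) :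
    HasDerivAt (fun y => v y * Real.exp (v y)) (v' * (1 + v x) * Real.exp (v x)) x :=
  (hv.fun_mul hv.exp).congr_deriv (by ring)

theorem hasDerivAt_of_eventually_eq_one_sub_mul {g u : ℝ → ℝ} {g' x : ℝ}
    (hg : HasDerivAt g g' x) (hx : x + 2 ≠ 0)
    (hu : ∀ᶠ y in 𝓝 x, g y = 1 - (y + 2) * (u y + 1)) :
    HasDerivAt u (-(g' + u x + 1) / (x + 2)) x := by
  have hu_eq : u =ᶠ[𝓝 x] fun y => (1 - g y) / (y + 2) - 1 := by
    have hx' : ∀ᶠ y in 𝓝 x, y + 2 ≠ 0 :=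
      (continuous_add_const 2).continuousAt.eventually_ne hx
    filter_upwards [hu, hx'] with y hy hy2
    rw [hy]
    field_simp
    ring
  have hdiv : HasDerivAt (fun y => (1 - g y) / (y + 2) - 1)
      ((-g' * (x + 2) - (1 - g x) * 1) / (x + 2) ^ 2) x := by
    simpa using
      (((hasDerivAt_const x 1).fun_sub hg).fun_div ((hasDerivAt_id' x).add_const 2) hx).sub_const 1
  refine (hdiv.congr_of_eventuallyEq hu_eq).congr_deriv ?_
  rw [hu_eq.eq_of_nhds]
  field_simp
  ring

theorem neg_add_div_mul_inv_add_inv_sq_eq {g u : ℝ → ℝ} {g' x : ℝ}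
    (hode : g' * (1 - g x) = x + 2 * g x) (hu : g x = 1 - (x + 2) * (u x + 1))
    (hu_ne : u x ≠ 0) (hx : x + 2 ≠ 0) :
    -(g' + u x + 1) / (x + 2) * (1 / u x + 1 / u x ^ 2) = -(1 / (x + 2)) := by
  rw [hu] at hode
  have hode' : g' * (u x + 1) + 2 * u x + 1 = 0 := by
    refine (mul_eq_zero.mp ?_).resolve_left hx
    linear_combination hode
  field_simp
  linear_combination (-1) * hode'

theorem hasDerivAt_inv_mul_exp_inv {u : ℝ → ℝ} {u' x : ℝ} (hu : HasDerivAt u u' x)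
    (hu_ne : u x ≠ 0) (hx : x + 2 ≠ 0) (hode : u' * (1 / u x + 1 / u x ^ 2) = -(1 / (x + 2))) :
    HasDerivAt (fun y => 1 / u y * exp (1 / u y)) (1 / u x * exp (1 / u x) / (x + 2)) x := by
  have hv : HasDerivAt (fun y => 1 / u y) (-u' / u x ^ 2) x := by
    simpa only [one_div] using hu.fun_inv hu_ne
  refine hv.mul_exp_self.congr_deriv ?_
  field_simp at hode ⊢
  linear_combination (-1) * hode

theorem change_of_variables_Lambert (a b : ℝ) (ha : a < 0) (hb : 0 < b)
    (g u : ℝ → ℝ)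
    (hg_anal : ∀ x ∈ Set.Ioo a b, AnalyticAt ℝ g x)
    (hg0 : g 0 = 0)
    (hode : ∀ x ∈ Set.Ioo a b, deriv g x * (1 - g x) = x + 2 * g x)
    (hu : ∀ x ∈ Set.Ioo a b, g x = 1 - (x + 2) * (u x + 1))
    (hu_ne : ∀ x ∈ Set.Ioo a b, u x ≠ 0)
    (hx2 : ∀ x ∈ Set.Ioo a b, (0 : ℝ) < x + 2) :
    u 0 = -1 / 2 ∧
    (∀ x ∈ Set.Ioo a b, deriv u x * (1 / u x + 1 / (u x) ^ 2) = -(1 / (x + 2))) ∧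
    (∀ x ∈ Set.Ioo a b, (1 / u x) * Real.exp (1 / u x) = -Real.exp (-2) * (x + 2)) := by
  have h0 : (0 : ℝ) ∈ Set.Ioo a b := ⟨ha, hb⟩
  have hu0 : u 0 = -1 / 2 := by linarith [hg0 ▸ hu 0 h0]
  have hu_deriv : ∀ x ∈ Set.Ioo a b, HasDerivAt u (-(deriv g x + u x + 1) / (x + 2)) x :=
    fun x hx => hasDerivAt_of_eventually_eq_one_sub_mul (hg_anal x hx).differentiableAt.hasDerivAt
      (hx2 x hx).ne' (eventually_of_mem (isOpen_Ioo.mem_nhds hx) hu)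
  have hu_ode : ∀ x ∈ Set.Ioo a b, deriv u x * (1 / u x + 1 / (u x) ^ 2) = -(1 / (x + 2)) :=
    fun x hx => (hu_deriv x hx).deriv ▸
      neg_add_div_mul_inv_add_inv_sq_eq (hode x hx) (hu x hx) (hu_ne x hx) (hx2 x hx).ne'
  refine ⟨hu0, hu_ode, fun x hx => ?_⟩
  have hconst := isOpen_Ioo.div_add_const_eq_of_hasDerivAt isPreconnected_Ioo
    (fun z hz => (hx2 z hz).ne') (fun z hz => hasDerivAt_inv_mul_exp_inv
      (hu_deriv z hz) (hu_ne z hz) (hx2 z hz).ne' ((hu_deriv z hz).deriv ▸ hu_ode z hz)) hx h0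
  rw [hu0, div_eq_iff (hx2 x hx).ne'] at hconst
  rw [hconst]
  norm_num
  ring
end

section
/- Define f_1(x) = ∑_{i≥0} α_{i,1}·x^{i+2}/(i+2)!, where α_{i,1} is determined by α_{i,0} = α_{0,i} = 1 and the recursion α_{i+1,j+1} = α_{i+1,j} + α_{i,j+1} + (1/2)∑_{p=0}^i ∑_{q=0}^j binomial(i+j+4,p+q+2)·α_{p,q}·α_{i-p,j-q}. Then f_1(x) = 2e^{2x} - ((1/2)x² + 2x + 2)e^x for all real x. -/
/-!
Setting `j = 0` in the recursion gives `α_{i+1,1} = α_{i,1} + 1 + ½ ∑_{k=2}^{i+2} C(i+4,k)`, and the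
binomial sum is `2^{i+4} - 2(i+4) - 2`, so `α_{n,1} = 2^{n+3} - (n² + 7n + 14)/2`. In the exponential
series, `2^{n+3}` is the coefficient of `x^{n+2}/(n+2)!` in `2e^{2x}`, and
`(n² + 7n + 14)/2 = (n+2)(n+1)/2 + 2(n+2) + 2` splits into the contributions of `x²/2 · eˣ`,
`2x · eˣ` and `2eˣ`.
-/

open Finset

lemma sum_range_choose_add_two (n : ℕ) :
    ∑ p ∈ range (n + 1), (n + 4).choose (p + 2) + 2 * (n + 4) + 2 = 2 ^ (n + 4) := by
  rw [← Nat.sum_range_choose (n + 4), sum_range_succ _ (n + 4), sum_range_succ _ (n + 3),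
    sum_range_succ' _ (n + 2), sum_range_succ' _ (n + 1)]
  rw [Nat.choose_self, Nat.choose_zero_right, Nat.choose_one_right, Nat.choose_succ_self_right]
  ring

lemma eq_of_succ_eq_add_sum_choose (b : ℕ → ℚ) (h0 : b 0 = 1)
    (hsucc : ∀ i, b (i + 1) = 1 + b i
      + (1 / 2) * ∑ p ∈ range (i + 1), ((i + 4).choose (p + 2) : ℚ))
    (n : ℕ) : b n = 2 ^ (n + 3) - ((n : ℚ) ^ 2 + 7 * n + 14) / 2 := by
  induction n with
  | zero => rw [h0]; norm_num
  | succ n ih =>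
    have hsum : ∑ p ∈ range (n + 1), ((n + 4).choose (p + 2) : ℚ) + 2 * (n + 4) + 2
        = 2 ^ (n + 4) := mod_cast sum_range_choose_add_two n
    rw [hsucc, ih]
    push_cast
    linear_combination (1 / 2 : ℚ) * hsum

lemma hasSum_pow_add_div_factorial (x : ℝ) (m : ℕ) :
    HasSum (fun n : ℕ => x ^ (n + m) / ((n + m).factorial : ℝ))
      (Real.exp x - ∑ k ∈ range m, x ^ k / (k.factorial : ℝ)) := by
  refine (hasSum_nat_add_iff' m).mpr ?_
  rw [Real.exp_eq_exp_ℝ]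
  exact NormedSpace.expSeries_div_hasSum_exp x

lemma hasSum_two_pow_sub_quadratic_mul_pow_div_factorial (x : ℝ) :
    HasSum (fun n : ℕ => (2 ^ (n + 3) - ((n : ℝ) ^ 2 + 7 * n + 14) / 2) * x ^ (n + 2)
        / ((n + 2).factorial : ℝ))
      (2 * Real.exp (2 * x) - ((1 / 2) * x ^ 2 + 2 * x + 2) * Real.exp x) := by
  have s1 := (hasSum_pow_add_div_factorial (2 * x) 2).mul_left 2
  have s2 := (hasSum_pow_add_div_factorial x 0).mul_left (x ^ 2 / 2)
  have s3 := (hasSum_pow_add_div_factorial x 1).mul_left (2 * x)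
  have s4 := (hasSum_pow_add_div_factorial x 2).mul_left 2
  convert s1.sub ((s2.add s3).add s4) using 1
  · rfl
  · funext n
    rw [Nat.factorial_succ (n + 1), Nat.factorial_succ n, add_zero]
    push_cast
    field_simp
    ring
  · simp only [sum_range_succ, sum_range_zero, Nat.factorial, Nat.cast_one, pow_zero, pow_one,
      div_one]
    ring

theorem f_one_closed_form (a : ℕ → ℕ → ℚ)
    (h1 : ∀ i, a i 0 = 1) (h2 : ∀ i, a 0 i = 1)
    (hrec : ∀ i j, a (i + 1) (j + 1) = a (i + 1) j + a i (j + 1)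
      + (1 / 2) * ∑ p ∈ Finset.range (i + 1), ∑ q ∈ Finset.range (j + 1),
          ((i + j + 4).choose (p + q + 2) : ℚ) * a p q * a (i - p) (j - q)) :
    ∀ x : ℝ, HasSum (fun i : ℕ => (a i 1 : ℝ) * x ^ (i + 2) / ((i + 2).factorial : ℝ))
      (2 * Real.exp (2 * x) - ((1 / 2) * x ^ 2 + 2 * x + 2) * Real.exp x) := by
  have hcol : ∀ i, a (i + 1) 1 = 1 + a i 1
      + (1 / 2) * ∑ p ∈ range (i + 1), ((i + 4).choose (p + 2) : ℚ) := fun i => by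
    simpa [h1, add_comm] using hrec i 0
  have hclosed := eq_of_succ_eq_add_sum_choose (fun i => a i 1) (h2 1) hcol
  intro x
  convert hasSum_two_pow_sub_quadratic_mul_pow_div_factorial x using 3 with n
  rw [hclosed n]
  push_cast
  rfl
end

section
/- Let I denote the integration operator I(f)(x) = ∫_0^x f(t) dt on formal power series (or smooth functions with f(0)=0 handled by definiteness), and let f_j(x) = ∑_{i≥0} α_{i,j}x^{i+2}/(i+2)! where α satisfies the Keel recursion with α_{i,0}=α_{0,i}=1. Then for all j ≥ 0: I^{j+1}(f_{j+1}) = I^{j+2}(f_{j+1}) + I^{j+1}(f_j) + (1/2)·∑_{q=0}^{j} I^q(f_q)·I^{j-q}(f_{j-q}). -/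
/-!
Write a series as the exponential generating function `∑ bₙ xⁿ / n!` of its coefficient
sequence. Then the integral operator shifts the sequence one place to the right, and the product
of two series becomes the binomial convolution of the sequences. Hence `I^k f_j` is the sequence
`α_{·,j}` shifted `k + 2` places, and the convolution of two shifted sequences is again a shifted
sequence, with the binomial double sums of the Keel recursion as entries. Comparing coefficients
of `xⁿ`, the identity is trivial for `n < j + 3`, reduces to `α_{0,j+1} = α_{0,j} = 1` at
`n = j + 3`, and for `n = i + j + 4` it is exactly the Keel recursion at `(i, j)`.
-/

/-- The integral operator on formal power series: `I(f)(x) = ∫_0^x f(t) dt`. -/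
noncomputable def intOp (f : PowerSeries ℚ) : PowerSeries ℚ :=
  PowerSeries.mk fun n => if n = 0 then 0 else PowerSeries.coeff (R := ℚ) (n - 1) f / (n : ℚ)

open PowerSeries Finset
open scoped Nat

section Delay

variable {M : Type*} [Zero M]

def delay (k : ℕ) (b : ℕ → M) (n : ℕ) : M :=
  if k ≤ n then b (n - k) else 0

lemma delay_apply_of_le {k n : ℕ} (b : ℕ → M) (h : k ≤ n) : delay k b n = b (n - k) :=
  if_pos h

lemma delay_apply_of_lt {k n : ℕ} (b : ℕ → M) (h : n < k) : delay k b n = 0 :=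
  if_neg (Nat.not_le.mpr h)

lemma delay_zero (b : ℕ → M) : delay 0 b = b :=
  funext fun n => delay_apply_of_le b n.zero_le

lemma delay_delay (k l : ℕ) (b : ℕ → M) : delay k (delay l b) = delay (k + l) b := by
  funext n
  unfold delay
  split_ifs <;> first | rfl | (congr 1; omega)

end Delay

def binomConv {R : Type*} [Semiring R] (b c : ℕ → R) (n : ℕ) : R :=
  ∑ m ∈ range (n + 1), (n.choose m : R) * b m * c (n - m)

lemma binomConv_delay_delay {R : Type*} [Semiring R] (s t : ℕ) (b c : ℕ → R) :
    binomConv (delay s b) (delay t c) = delay (s + t) fun r =>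
      ∑ p ∈ range (r + 1), ((r + s + t).choose (p + s) : R) * b p * c (r - p) := by
  funext n
  unfold binomConv
  by_cases hn : s + t ≤ n
  · obtain ⟨r, rfl⟩ : ∃ r, n = r + s + t := ⟨n - (s + t), by omega⟩
    rw [delay_apply_of_le _ hn, show r + s + t - (s + t) = r by omega]
    -- only the terms `m = p + s` with `p ≤ r` survive
    symm
    refine sum_of_injOn (· + s) (add_left_injective s).injOn
      (fun p hp => by simp only [coe_range, Set.mem_Iio] at hp ⊢; omega)
      (fun m hm hm' => ?_) (fun p hp => ?_)
    · simp only [Set.mem_image, mem_coe, mem_range, not_exists, not_and] at hm hm'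
      by_cases hsm : s ≤ m
      · have hm_out := hm' (m - s)
        rw [delay_apply_of_lt c (by omega), mul_zero]
      · rw [delay_apply_of_lt b (by omega), mul_zero, zero_mul]
    · rw [mem_range] at hp
      rw [delay_apply_of_le _ (by omega), delay_apply_of_le _ (by omega), Nat.add_sub_cancel,
        show r + s + t - (p + s) - t = r - p by omega]
  · rw [delay_apply_of_lt _ (not_le.mp hn)]
    refine sum_eq_zero fun m hm => ?_
    rw [mem_range] at hm
    by_cases hsm : s ≤ m
    · rw [delay_apply_of_lt c (by omega), mul_zero]
    · rw [delay_apply_of_lt b (by omega), mul_zero, zero_mul]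

section Egf

variable {K : Type*} [Field K]

noncomputable def egf : (ℕ → K) →ₗ[K] K⟦X⟧ where
  toFun b := mk fun n => b n / (n ! : K)
  map_add' b c := by ext n; simp [add_div]
  map_smul' r b := by ext n; simp [mul_div_assoc]

lemma coeff_egf (b : ℕ → K) (n : ℕ) : coeff n (egf b) = b n / n ! := by
  simp [egf]

variable [CharZero K]

lemma egf_mul_egf (b c : ℕ → K) : egf b * egf c = egf (binomConv b c) := by
  ext n
  rw [coeff_mul, coeff_egf, binomConv, sum_div, Nat.sum_antidiagonal_eq_sum_range_succ_mk]
  refine sum_congr rfl fun m hm => ?_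
  simp only [coeff_egf]
  have hm : m ≤ n := mem_range_succ_iff.mp hm
  have hchoose : (n.choose m : K) ≠ 0 := by exact_mod_cast (Nat.choose_pos hm).ne'
  rw [← Nat.choose_mul_factorial_mul_factorial hm]
  push_cast
  field_simp

end Egf

lemma intOp_egf (b : ℕ → ℚ) : intOp (egf b) = egf (delay 1 b) := by
  ext n
  rw [intOp, coeff_mk, coeff_egf, coeff_egf, delay]
  rcases n with _ | n
  · simp
  · rw [if_neg n.succ_ne_zero, if_pos (Nat.le_add_left 1 n), Nat.add_sub_cancel,
      Nat.factorial_succ]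
    push_cast
    field_simp

lemma iterate_intOp_egf (k : ℕ) (b : ℕ → ℚ) : intOp^[k] (egf b) = egf (delay k b) := by
  induction k with
  | zero => rw [Function.iterate_zero, id, delay_zero]
  | succ k ih => rw [Function.iterate_succ_apply', ih, intOp_egf, delay_delay, add_comm]

lemma keel_delay_identity (a : ℕ → ℕ → ℚ) (h2 : ∀ i, a 0 i = 1)
    (hrec : ∀ i j, a (i + 1) (j + 1) = a (i + 1) j + a i (j + 1)
      + (1 / 2) * ∑ p ∈ range (i + 1), ∑ q ∈ range (j + 1),
          ((i + j + 4).choose (p + q + 2) : ℚ) * a p q * a (i - p) (j - q)) (j : ℕ) :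
    delay (j + 3) (a · (j + 1)) = delay (j + 4) (a · (j + 1)) + delay (j + 3) (a · j)
      + (1 / 2 : ℚ) • ∑ q ∈ range (j + 1),
          binomConv (delay (q + 2) (a · q)) (delay (j - q + 2) (a · (j - q))) := by
  have hconv : ∀ q ∈ range (j + 1),
      binomConv (delay (q + 2) (a · q)) (delay (j - q + 2) (a · (j - q))) =
        delay (j + 4) fun i => ∑ p ∈ range (i + 1),
          ((i + j + 4).choose (p + q + 2) : ℚ) * a p q * a (i - p) (j - q) := by
    intro q hq
    rw [mem_range] at hq
    rw [binomConv_delay_delay, show q + 2 + (j - q + 2) = j + 4 by omega]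
    refine congrArg (delay _) (funext fun i => sum_congr rfl fun p _ => ?_)
    rw [show i + (q + 2) + (j - q + 2) = i + j + 4 by omega, ← add_assoc]
  rw [sum_congr rfl hconv]
  funext n
  simp only [Pi.add_apply, Pi.smul_apply, Finset.sum_apply, smul_eq_mul]
  obtain hn | rfl | hn : n < j + 3 ∨ n = j + 3 ∨ j + 4 ≤ n := by omega
  · simp [delay_apply_of_lt, hn, show n < j + 4 by omega]
  · simp [delay_apply_of_le, delay_apply_of_lt, h2]
  · obtain ⟨i, rfl⟩ := Nat.exists_eq_add_of_le' hn
    simp only [delay_apply_of_le _ (show j + 3 ≤ i + (j + 4) by omega), delay_apply_of_le _ hn,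
      show i + (j + 4) - (j + 3) = i + 1 by omega, Nat.add_sub_cancel, hrec i j]
    rw [sum_comm]
    ring

theorem integral_operator_identity_general (a : ℕ → ℕ → ℚ)
    (h2 : ∀ i, a 0 i = 1)
    (hrec : ∀ i j, a (i + 1) (j + 1) = a (i + 1) j + a i (j + 1)
      + (1 / 2) * ∑ p ∈ Finset.range (i + 1), ∑ q ∈ Finset.range (j + 1),
          ((i + j + 4).choose (p + q + 2) : ℚ) * a p q * a (i - p) (j - q))
    (f : ℕ → PowerSeries ℚ)
    (hf : ∀ j n, PowerSeries.coeff (R := ℚ) n (f j) =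
      if 2 ≤ n then a (n - 2) j / (n.factorial : ℚ) else 0) :
    ∀ j, intOp^[j + 1] (f (j + 1)) =
      intOp^[j + 2] (f (j + 1)) + intOp^[j + 1] (f j)
      + PowerSeries.C (R := ℚ) (1 / 2) * ∑ q ∈ Finset.range (j + 1),
          intOp^[q] (f q) * intOp^[j - q] (f (j - q)) := by
  have hf_egf : ∀ q, f q = egf (delay 2 (a · q)) := fun q => by
    ext n
    rw [hf, coeff_egf, delay]
    split_ifs <;> simp
  have hiterate : ∀ k q, intOp^[k] (f q) = egf (delay (k + 2) (a · q)) := fun k q => by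
    rw [hf_egf, iterate_intOp_egf, delay_delay]
  intro j
  simp only [hiterate, egf_mul_egf, ← smul_eq_C_mul, ← map_sum, ← map_smul, ← map_add]
  exact congrArg egf (keel_delay_identity a h2 hrec j)

theorem integral_operator_identity (a : ℕ → ℕ → ℚ)
    (h1 : ∀ i, a i 0 = 1) (h2 : ∀ i, a 0 i = 1)
    (hrec : ∀ i j, a (i + 1) (j + 1) = a (i + 1) j + a i (j + 1)
      + (1 / 2) * ∑ p ∈ Finset.range (i + 1), ∑ q ∈ Finset.range (j + 1),
          ((i + j + 4).choose (p + q + 2) : ℚ) * a p q * a (i - p) (j - q))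
    (f : ℕ → PowerSeries ℚ)
    (hf : ∀ j n, PowerSeries.coeff (R := ℚ) n (f j) =
      if 2 ≤ n then a (n - 2) j / (n.factorial : ℚ) else 0) :
    ∀ j, intOp^[j + 1] (f (j + 1)) =
      intOp^[j + 2] (f (j + 1)) + intOp^[j + 1] (f j)
      + PowerSeries.C (R := ℚ) (1 / 2) * ∑ q ∈ Finset.range (j + 1),
          intOp^[q] (f q) * intOp^[j - q] (f (j - q)) :=
  integral_operator_identity_general a h2 hrec f hf
end
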